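/- arXiv:2506.23748 — 3 statements merged into one kernel-verified Lean document; each statement's English description precedes it below -/
import Mathlib

section
/- If u : [0,1] → ℝ is absolutely continuous with u(0) = 0 and its energy E(u) = (1/2) ∫_0^1 (u'(r)^2 + sin^2(u(r))/r^2) r dr satisfies E(u) ≤ 2, then ‖u‖_{L^∞([0,1])} ≤ 2 arcsin(√(E(u)/2)). -/
open Real intervalIntegral MeasureTheory Set

/-!
Let `G z = ∫₀ᶻ |sin|`. By the chain rule `(G ∘ u)' = |sin u| u'`, and Young's inequality
gives `|sin u · u'| ≤ (u'² + sin² u / r²) r / 2`, so integrating from `0` yields `|G (u r)| ≤ E`.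
Since `G` is odd and strictly increasing with `G (2 arcsin √β) = 2β` for `β ∈ [0, 1]`, this
inverts to `|u r| ≤ 2 arcsin √(E / 2)`.
-/

/-- The paper's `G` divided by `π`. -/
noncomputable def integralAbsSin (z : ℝ) : ℝ := ∫ s in (0:ℝ)..z, |sin s|

lemma continuous_abs_sin : Continuous fun s => |sin s| := continuous_sin.abs

lemma hasDerivAt_integralAbsSin (z : ℝ) : HasDerivAt integralAbsSin |sin z| z :=
  integral_hasDerivAt_right (continuous_abs_sin.intervalIntegrable _ _)
    (continuous_abs_sin.stronglyMeasurableAtFilter _ _) continuous_abs_sin.continuousAt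

@[simp]
lemma integralAbsSin_zero : integralAbsSin 0 = 0 := integral_same

lemma integralAbsSin_neg (z : ℝ) : integralAbsSin (-z) = -integralAbsSin z := by
  have h := integral_comp_neg (a := 0) (b := z) fun s => |sin s|
  simp only [sin_neg, abs_neg, neg_zero] at h
  rw [integralAbsSin, integralAbsSin, h, integral_symm]

lemma integralAbsSin_of_mem_Icc {z : ℝ} (hz : z ∈ Icc 0 π) : integralAbsSin z = 1 - cos z := by
  rw [integralAbsSin, integral_congr (g := sin), integral_sin, cos_zero]
  intro s hs
  rw [uIcc_of_le hz.1] at hs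
  exact abs_of_nonneg (sin_nonneg_of_nonneg_of_le_pi hs.1 (hs.2.trans hz.2))

lemma integral_abs_sin_pos {a b : ℝ} (hab : a < b) : 0 < ∫ s in a..b, |sin s| := by
  have hzeros : volume {s : ℝ | sin s = 0} = 0 := by
    have : {s : ℝ | sin s = 0} = range fun n : ℤ => (n : ℝ) * π := by
      ext s; simp [sin_eq_zero_iff]
    exact this ▸ (countable_range _).measure_zero _
  rw [integral_pos_iff_support_of_nonneg_ae (ae_of_all _ fun _ => abs_nonneg _)
    (continuous_abs_sin.intervalIntegrable _ _)]
  refine ⟨hab, ?_⟩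
  calc 0 < volume (Ioc a b) := by simp [hab]
    _ = volume (Ioc a b \ {s | sin s = 0}) := (measure_sdiff_null hzeros).symm
    _ ≤ volume (Function.support (fun s => |sin s|) ∩ Ioc a b) :=
      measure_mono fun s hs => ⟨abs_ne_zero.2 hs.2, hs.1⟩

lemma integralAbsSin_strictMono : StrictMono integralAbsSin := fun a b hab => by
  rw [← sub_pos, integralAbsSin, integralAbsSin,
    integral_interval_sub_left (continuous_abs_sin.intervalIntegrable _ _)
      (continuous_abs_sin.intervalIntegrable _ _)]
  exact integral_abs_sin_pos hab

lemma abs_le_of_abs_integralAbsSin_le {z b : ℝ} (h : |integralAbsSin z| ≤ integralAbsSin b) :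
    |z| ≤ b := by
  rw [abs_le, ← integralAbsSin_neg] at *
  exact ⟨integralAbsSin_strictMono.le_iff_le.1 h.1, integralAbsSin_strictMono.le_iff_le.1 h.2⟩

lemma integralAbsSin_two_mul_arcsin_sqrt {β : ℝ} (h0 : 0 ≤ β) (h1 : β ≤ 1) :
    integralAbsSin (2 * arcsin (√β)) = 2 * β := by
  have hmem : 2 * arcsin (√β) ∈ Icc 0 π :=
    ⟨mul_nonneg zero_le_two (arcsin_nonneg.2 (sqrt_nonneg _)),
      by linarith [arcsin_le_pi_div_two (√β)]⟩
  rw [integralAbsSin_of_mem_Icc hmem, cos_two_mul, cos_arcsin, sq_sqrt, sq_sqrt h0]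
  · ring
  · nlinarith [sq_sqrt h0]

/-- No integrability of `g'` is required, so the derivative of `u` need not be measurable. -/
lemma abs_sub_le_integral_of_abs_deriv_le {g g' φ : ℝ → ℝ} {a b : ℝ} (hab : a ≤ b)
    (hcont : ContinuousOn g (Icc a b)) (hderiv : ∀ x ∈ Ioo a b, HasDerivAt g (g' x) x)
    (hφ : IntegrableOn φ (Icc a b)) (hle : ∀ x ∈ Ioo a b, |g' x| ≤ φ x) :
    |g b - g a| ≤ ∫ x in a..b, φ x := by
  refine abs_sub_le_iff.2 ⟨?_, ?_⟩
  · exact sub_le_integral_of_hasDeriv_right_of_le hab hcont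
      (fun x hx => (hderiv x hx).hasDerivWithinAt) hφ
      fun x hx => (le_abs_self _).trans (hle x hx)
  · have := sub_le_integral_of_hasDeriv_right_of_le hab hcont.neg
      (fun x hx => (hderiv x hx).neg.hasDerivWithinAt) hφ
      fun x hx => (neg_le_abs _).trans (hle x hx)
    simp only [Pi.neg_apply, neg_sub_neg] at this
    linarith

noncomputable def energyDensity (u u' : ℝ → ℝ) (r : ℝ) : ℝ :=
  ((u' r) ^ 2 + sin (u r) ^ 2 / r ^ 2) * r

lemma energyDensity_nonneg (u u' : ℝ → ℝ) {r : ℝ} (hr : 0 ≤ r) : 0 ≤ energyDensity u u' r :=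
  mul_nonneg (by positivity) hr

lemma abs_sin_mul_deriv_le_half_energyDensity (u u' : ℝ → ℝ) {r : ℝ} (hr : 0 < r) :
    |sin (u r) * u' r| ≤ energyDensity u u' r / 2 := by
  have h : energyDensity u u' r = ((u' r * r) ^ 2 + sin (u r) ^ 2) / r := by
    unfold energyDensity; field_simp
  rw [h, div_div, le_div_iff₀ (by positivity), abs_mul, ← sq_abs (u' r * r),
    ← sq_abs (sin (u r)), abs_mul, abs_of_pos hr]
  nlinarith [sq_nonneg (|sin (u r)| - |u' r| * r)]

lemma abs_integralAbsSin_comp_le_energy {u u' : ℝ → ℝ} {R r : ℝ}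
    (hderiv : ∀ x ∈ Icc 0 R, HasDerivAt u (u' x) x) (hu0 : u 0 = 0)
    (hint : IntervalIntegrable (energyDensity u u') volume 0 R) (hr : r ∈ Icc 0 R) :
    |integralAbsSin (u r)| ≤ (1 / 2) * ∫ x in (0:ℝ)..R, energyDensity u u' x := by
  have hsub : Icc 0 r ⊆ Icc 0 R := Icc_subset_Icc_right hr.2
  have hcomp : ∀ x ∈ Icc 0 r,
      HasDerivAt (integralAbsSin ∘ u) (|sin (u x)| * u' x) x := fun x hx =>
    (hasDerivAt_integralAbsSin (u x)).comp x (hderiv x (hsub hx))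
  have hφ : IntegrableOn (fun x => energyDensity u u' x / 2) (Icc 0 r) :=
    ((intervalIntegrable_iff_integrableOn_Icc_of_le (hr.1.trans hr.2)).1 hint).mono_set hsub
      |>.div_const 2
  calc |integralAbsSin (u r)| = |(integralAbsSin ∘ u) r - (integralAbsSin ∘ u) 0| := by
        simp [hu0]
    _ ≤ ∫ x in (0:ℝ)..r, energyDensity u u' x / 2 :=
        abs_sub_le_integral_of_abs_deriv_le hr.1
          (fun x hx => (hcomp x hx).continuousAt.continuousWithinAt)
          (fun x hx => hcomp x (Ioo_subset_Icc_self hx)) hφ fun x hx => by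
            simpa only [abs_mul, abs_abs] using
              abs_sin_mul_deriv_le_half_energyDensity u u' hx.1
    _ ≤ ∫ x in (0:ℝ)..R, energyDensity u u' x / 2 :=
        integral_mono_interval le_rfl hr.1 hr.2
          ((ae_restrict_iff' measurableSet_Ioc).2 (ae_of_all _ fun x hx =>
            div_nonneg (energyDensity_nonneg u u' hx.1.le) zero_le_two))
          (hint.div_const 2)
    _ = (1 / 2) * ∫ x in (0:ℝ)..R, energyDensity u u' x := by
        rw [intervalIntegral.integral_div]; ring

theorem linf_energy_bound (u u' : ℝ → ℝ) (E : ℝ)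
    (hderiv : ∀ r ∈ Set.Icc (0:ℝ) 1, HasDerivAt u (u' r) r)
    (hu0 : u 0 = 0)
    (hE : E = (1/2) * ∫ r in (0:ℝ)..1,
      ((u' r)^2 + (Real.sin (u r))^2 / r^2) * r)
    (hint : IntervalIntegrable
      (fun r => ((u' r)^2 + (Real.sin (u r))^2 / r^2) * r)
      MeasureTheory.volume 0 1)
    (hE2 : E ≤ 2) :
    ∀ r ∈ Set.Icc (0:ℝ) 1, |u r| ≤ 2 * Real.arcsin (Real.sqrt (E / 2)) := by
  have hE0 : 0 ≤ E := hE ▸ mul_nonneg one_half_pos.le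
    (integral_nonneg zero_le_one fun x hx => energyDensity_nonneg u u' hx.1)
  intro r hr
  apply abs_le_of_abs_integralAbsSin_le
  rw [integralAbsSin_two_mul_arcsin_sqrt (by linarith) (by linarith),
    mul_div_cancel₀ _ two_ne_zero]
  exact hE ▸ abs_integralAbsSin_comp_le_energy hderiv hu0 hint hr
end

section
/- Let 0 < b < 1 and let u : [0,1] → ℝ be absolutely continuous with u(0) = u(1) = 0 and E(u) ≤ 2b, where E(u) = (1/2) ∫_0^1 (u'(r)^2 + sin^2(u(r))/r^2) r dr. Then C_b ‖u‖_{H^1_r}^2 ≤ E(u) with C_b = b(1-b)^2 / (2 arcsin^2 √b). -/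
/-!
Since `|d/dr cos u| = |u' sin u| ≤ (u'² + sin² u / r²) r / 2` (AM-GM), integrating from `r` to `1`
gives `1 - cos u(r) ≤ E(u) ≤ 2b`, so the intermediate value theorem keeps `|u|` below
`M = 2 arcsin √b < π`. On `[0, M]` concavity of `sin` gives `|sin z| ≥ (sin M / M) |z|`, and
`sin M / M = √b √(1 - b) / arcsin √b ≥ α_b := √b (1 - b) / arcsin √b`. Hence the energy density
dominates `α_b²` times the `H¹_r` density pointwise, and `C_b = α_b² / 2`.
-/

open Real intervalIntegral

open Set

lemma mul_sin_le_sin_mul {t M : ℝ} (ht₀ : 0 ≤ t) (ht₁ : t ≤ 1) (hM₀ : 0 ≤ M) (hMπ : M ≤ π) :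
    t * sin M ≤ sin (t * M) := by
  simpa using strictConcaveOn_sin_Icc.concaveOn.2 ⟨le_rfl, pi_pos.le⟩ ⟨hM₀, hMπ⟩
    (sub_nonneg.2 ht₁) ht₀ (by ring)

lemma sin_div_mul_abs_le_abs_sin {M x : ℝ} (hM : 0 < M) (hMπ : M ≤ π) (hx : |x| ≤ M) :
    sin M / M * |x| ≤ |sin x| := by
  wlog hx₀ : 0 ≤ x
  case inr => simpa using this hM hMπ (by rwa [abs_neg]) (neg_nonneg.2 (le_of_not_ge hx₀))
  rw [abs_of_nonneg hx₀] at hx ⊢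
  have hsin := mul_sin_le_sin_mul (div_nonneg hx₀ hM.le) ((div_le_one hM).2 hx) hM.le hMπ
  rw [div_mul_cancel₀ x hM.ne'] at hsin
  calc sin M / M * x = x / M * sin M := by ring
    _ ≤ sin x := hsin
    _ ≤ |sin x| := le_abs_self _

lemma sqrt_mul_one_sub_div_arcsin_sqrt_le_one {b : ℝ} (hb₀ : 0 ≤ b) (hb₁ : b ≤ 1) :
    √b * (1 - b) / arcsin √b ≤ 1 := by
  refine div_le_one_of_le₀ ?_ (arcsin_nonneg.2 (sqrt_nonneg b))
  calc √b * (1 - b) ≤ √b := mul_le_of_le_one_right (sqrt_nonneg b) (by linarith)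
    _ = sin (arcsin √b) := (sin_arcsin (by linarith [sqrt_nonneg b]) (sqrt_le_one.2 hb₁)).symm
    _ ≤ arcsin √b := sin_le (arcsin_nonneg.2 (sqrt_nonneg b))

lemma mul_abs_le_abs_sin_of_abs_le_two_arcsin_sqrt {b x : ℝ} (hb₀ : 0 < b) (hb₁ : b ≤ 1)
    (hx : |x| ≤ 2 * arcsin √b) : √b * (1 - b) / arcsin √b * |x| ≤ |sin x| := by
  have hθ : 0 < arcsin √b := arcsin_pos.2 (sqrt_pos.2 hb₀)
  have hsin : sin (2 * arcsin √b) = 2 * √b * √(1 - b) := by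
    rw [sin_two_mul, sin_arcsin (by linarith [sqrt_nonneg b]) (sqrt_le_one.2 hb₁), cos_arcsin,
      sq_sqrt hb₀.le, mul_assoc]
  calc √b * (1 - b) / arcsin √b * |x|
      ≤ sin (2 * arcsin √b) / (2 * arcsin √b) * |x| := by
        rw [hsin, mul_assoc 2, mul_div_mul_left _ _ two_ne_zero]
        gcongr
        rw [le_sqrt (by linarith) (by linarith)]
        nlinarith
    _ ≤ |sin x| :=
        sin_div_mul_abs_le_abs_sin (by positivity) (by linarith [arcsin_le_pi_div_two √b]) hx

lemma le_two_arcsin_sqrt_of_one_sub_cos_le {b c : ℝ} (hc₀ : 0 ≤ c) (hcπ : c ≤ π)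
    (hcos : 1 - cos c ≤ 2 * b) : c ≤ 2 * arcsin √b := by
  have hsin : sin (c / 2) ≤ √b := by
    rw [sin_half_eq_sqrt hc₀ (by linarith [pi_pos])]
    exact sqrt_le_sqrt (by linarith)
  have := arcsin_le_arcsin hsin
  rw [arcsin_sin (by linarith [pi_pos]) (by linarith)] at this
  linarith

lemma abs_le_two_arcsin_sqrt_of_forall_one_sub_cos_le {f : ℝ → ℝ} {a b β : ℝ} (hab : a ≤ b)
    (hf : ContinuousOn f (Icc a b)) (hfb : f b = 0) (hβ : β < 1)
    (hcos : ∀ s ∈ Icc a b, 1 - cos (f s) ≤ 2 * β) : |f a| ≤ 2 * arcsin √β := by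
  by_contra! hlt
  have hMπ : 2 * arcsin √β < π := by
    linarith [arcsin_lt_pi_div_two.2 ((sqrt_lt' one_pos).2 (by simpa using hβ))]
  set c := min |f a| π
  obtain ⟨s, hs, hfs⟩ : ∃ s ∈ uIcc a b, |f s| = c := by
    refine intermediate_value_uIcc (f := fun s => |f s|) (by rw [uIcc_of_le hab]; exact hf.abs) ?_
    rw [hfb, abs_zero, mem_uIcc]
    exact Or.inr ⟨by positivity, min_le_left _ _⟩
  rw [uIcc_of_le hab] at hs
  have hc : c ≤ 2 * arcsin √β :=
    le_two_arcsin_sqrt_of_one_sub_cos_le (by positivity) (min_le_right _ _)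
      (by rw [← hfs, cos_abs]; exact hcos s hs)
  exact (lt_min hlt hMπ).not_ge hc

/-- Integrated over `(0, 1)`, `radialDensity u' (sin ∘ u)` gives `2 E(u)` and `radialDensity u' u`
gives `‖u‖²_{H¹_r}`. -/
noncomputable def radialDensity (v w : ℝ → ℝ) (r : ℝ) : ℝ := (v r ^ 2 + w r ^ 2 / r ^ 2) * r

lemma radialDensity_nonneg {v w : ℝ → ℝ} {r : ℝ} (hr : 0 ≤ r) : 0 ≤ radialDensity v w r := by
  unfold radialDensity
  positivity

lemma two_mul_abs_mul_le_radialDensity (v w : ℝ → ℝ) {r : ℝ} (hr : 0 < r) :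
    2 * |v r * w r| ≤ radialDensity v w r := by
  have key : 0 ≤ (|v r| * r - |w r|) ^ 2 / r := by positivity
  rw [radialDensity, abs_mul]
  field_simp at key ⊢
  nlinarith [sq_abs (v r), sq_abs (w r)]

lemma sq_mul_radialDensity_le {v w w' : ℝ → ℝ} {c r : ℝ} (hr : 0 ≤ r) (hc₀ : 0 ≤ c)
    (hc₁ : c ≤ 1) (hw : c * |w r| ≤ |w' r|) :
    c ^ 2 * radialDensity v w r ≤ radialDensity v w' r := by
  have hv : c ^ 2 * v r ^ 2 ≤ v r ^ 2 :=
    mul_le_of_le_one_left (sq_nonneg _) (pow_le_one₀ hc₀ hc₁)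
  have hw' : c ^ 2 * w r ^ 2 ≤ w' r ^ 2 := by
    simpa only [mul_pow, sq_abs] using pow_le_pow_left₀ (by positivity) hw 2
  unfold radialDensity
  calc c ^ 2 * ((v r ^ 2 + w r ^ 2 / r ^ 2) * r)
      = (c ^ 2 * v r ^ 2 + c ^ 2 * w r ^ 2 / r ^ 2) * r := by ring
    _ ≤ _ := by gcongr

lemma cos_sub_cos_le_half_integral_radialDensity {u u' : ℝ → ℝ} {a b : ℝ} (ha : 0 < a)
    (hab : a ≤ b) (hu : ContinuousOn u (Icc a b))
    (hderiv : ∀ s ∈ Ioo a b, HasDerivAt u (u' s) s)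
    (hint : IntervalIntegrable (radialDensity u' (sin ∘ u)) MeasureTheory.volume a b) :
    cos (u b) - cos (u a) ≤ 1 / 2 * ∫ s in a..b, radialDensity u' (sin ∘ u) s := by
  rw [← integral_const_mul]
  refine sub_le_integral_of_hasDeriv_right_of_le hab (continuous_cos.comp_continuousOn hu)
    (fun s hs => (hderiv s hs).cos.hasDerivWithinAt)
    ((intervalIntegrable_iff_integrableOn_Icc_of_le hab).1 (hint.const_mul _)) fun s hs => ?_
  calc -sin (u s) * u' s ≤ |u' s * sin (u s)| := by rw [neg_mul, mul_comm]; exact neg_le_abs _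
    _ ≤ 1 / 2 * radialDensity u' (sin ∘ u) s := by
      have : 2 * |u' s * sin (u s)| ≤ radialDensity u' (sin ∘ u) s :=
        two_mul_abs_mul_le_radialDensity u' (sin ∘ u) (ha.trans hs.1)
      linarith

lemma abs_le_two_arcsin_sqrt_of_half_integral_radialDensity_le {u u' : ℝ → ℝ} {R b r : ℝ}
    (hderiv : ∀ s ∈ Icc 0 R, HasDerivAt u (u' s) s) (huR : u R = 0)
    (hint : IntervalIntegrable (radialDensity u' (sin ∘ u)) MeasureTheory.volume 0 R)
    (hb : b < 1) (henergy : 1 / 2 * ∫ s in (0:ℝ)..R, radialDensity u' (sin ∘ u) s ≤ 2 * b)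
    (hr : r ∈ Ioc 0 R) : |u r| ≤ 2 * arcsin √b := by
  have hu : ContinuousOn u (Icc 0 R) := fun s hs =>
    (hderiv s hs).continuousAt.continuousWithinAt
  refine abs_le_two_arcsin_sqrt_of_forall_one_sub_cos_le hr.2
    (hu.mono (Icc_subset_Icc hr.1.le le_rfl)) huR hb fun t ht => ?_
  have ht₀ : 0 < t := hr.1.trans_le ht.1
  calc 1 - cos (u t) = cos (u R) - cos (u t) := by rw [huR, cos_zero]
    _ ≤ 1 / 2 * ∫ s in t..R, radialDensity u' (sin ∘ u) s :=
      cos_sub_cos_le_half_integral_radialDensity ht₀ ht.2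
        (hu.mono (Icc_subset_Icc ht₀.le le_rfl))
        (fun s hs => hderiv s ⟨(ht₀.trans hs.1).le, hs.2.le⟩)
        (hint.mono_set (by
          rw [uIcc_of_le ht.2, uIcc_of_le (hr.1.le.trans hr.2)]
          exact Icc_subset_Icc ht₀.le le_rfl))
    _ ≤ 1 / 2 * ∫ s in (0:ℝ)..R, radialDensity u' (sin ∘ u) s := by
      gcongr
      exact integral_mono_interval ht₀.le ht.2 le_rfl
        ((MeasureTheory.ae_restrict_iff' measurableSet_Ioc).2
          (.of_forall fun s hs => radialDensity_nonneg hs.1.le)) hint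
    _ ≤ 2 * b := henergy

theorem energy_lower_bound_general (b : ℝ) (hb : 0 < b) (hb1 : b < 1)
    (u u' : ℝ → ℝ) (E : ℝ)
    (hderiv : ∀ r ∈ Set.Icc (0:ℝ) 1, HasDerivAt u (u' r) r)
    (hu1 : u 1 = 0)
    (hE : E = (1/2) * ∫ r in (0:ℝ)..1,
      ((u' r)^2 + (Real.sin (u r))^2 / r^2) * r)
    (hintH : IntervalIntegrable (fun r => ((u' r)^2 + (u r)^2 / r^2) * r)
      MeasureTheory.volume 0 1)
    (hintE : IntervalIntegrable
      (fun r => ((u' r)^2 + (Real.sin (u r))^2 / r^2) * r)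
      MeasureTheory.volume 0 1)
    (hEb : E ≤ 2 * b) :
    (b * (1 - b)^2 / (2 * (Real.arcsin (Real.sqrt b))^2)) *
      (∫ r in (0:ℝ)..1, ((u' r)^2 + (u r)^2 / r^2) * r) ≤ E := by
  change IntervalIntegrable (radialDensity u' u) _ _ _ at hintH
  change IntervalIntegrable (radialDensity u' (sin ∘ u)) _ _ _ at hintE
  change E = 1 / 2 * ∫ r in (0:ℝ)..1, radialDensity u' (sin ∘ u) r at hE
  change _ * ∫ r in (0:ℝ)..1, radialDensity u' u r ≤ E
  set α := √b * (1 - b) / arcsin √b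
  have hα₀ : 0 ≤ α :=
    div_nonneg (mul_nonneg (sqrt_nonneg b) (by linarith)) (arcsin_nonneg.2 (sqrt_nonneg b))
  have hpt (r : ℝ) (hr : r ∈ Ioo (0:ℝ) 1) :
      α ^ 2 * radialDensity u' u r ≤ radialDensity u' (sin ∘ u) r :=
    sq_mul_radialDensity_le hr.1.le hα₀ (sqrt_mul_one_sub_div_arcsin_sqrt_le_one hb.le hb1.le)
      (mul_abs_le_abs_sin_of_abs_le_two_arcsin_sqrt hb hb1.le
        (abs_le_two_arcsin_sqrt_of_half_integral_radialDensity_le hderiv hu1 hintE hb1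
          (hE ▸ hEb) ⟨hr.1, hr.2.le⟩))
  calc b * (1 - b) ^ 2 / (2 * arcsin √b ^ 2) * ∫ r in (0:ℝ)..1, radialDensity u' u r
      = 1 / 2 * ∫ r in (0:ℝ)..1, α ^ 2 * radialDensity u' u r := by
        rw [integral_const_mul, div_pow, mul_pow, sq_sqrt hb.le]
        ring
    _ ≤ 1 / 2 * ∫ r in (0:ℝ)..1, radialDensity u' (sin ∘ u) r := by
        gcongr
        exact integral_mono_on_of_le_Ioo zero_le_one (hintH.const_mul _) hintE hpt
    _ = E := hE.symm

theorem energy_lower_bound (b : ℝ) (hb : 0 < b) (hb1 : b < 1)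
    (u u' : ℝ → ℝ) (E : ℝ)
    (hderiv : ∀ r ∈ Set.Icc (0:ℝ) 1, HasDerivAt u (u' r) r)
    (hu0 : u 0 = 0) (hu1 : u 1 = 0)
    (hE : E = (1/2) * ∫ r in (0:ℝ)..1,
      ((u' r)^2 + (Real.sin (u r))^2 / r^2) * r)
    (hintH : IntervalIntegrable (fun r => ((u' r)^2 + (u r)^2 / r^2) * r)
      MeasureTheory.volume 0 1)
    (hintE : IntervalIntegrable
      (fun r => ((u' r)^2 + (Real.sin (u r))^2 / r^2) * r)
      MeasureTheory.volume 0 1)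
    (hEb : E ≤ 2 * b) :
    (b * (1 - b)^2 / (2 * (Real.arcsin (Real.sqrt b))^2)) *
      (∫ r in (0:ℝ)..1, ((u' r)^2 + (u r)^2 / r^2) * r) ≤ E :=
  energy_lower_bound_general b hb hb1 u u' E hderiv hu1 hE hintH hintE hEb
end

section
/- Convexity control of the nonlinear term: for u, w : [0,1] → ℝ in H^1_{r,0} (with all integrals finite), ∫_0^1 f(u(r)) (w(r) - u(r)) / r dr ≤ (1/2)(‖w‖_{H^1_r}^2 - ‖u‖_{H^1_r}^2) + E(u) - E(w), where f(z) = z - (1/2) sin(2z), E(v) = (1/2)∫_0^1 (v'^2 + sin^2(v)/r^2) r dr and ‖v‖_{H^1_r}^2 = ∫_0^1 (v'^2 + v^2/r^2) r dr. -/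
/-! The primitive `F z = (z² - sin² z) / 2` of the nonlinearity `f z = z - sin (2z) / 2` is convex,
since `f` is monotone (`sin` is 1-Lipschitz). Hence `f u (w - u) ≤ F w - F u` pointwise; dividing
by `r > 0` and integrating gives the claim, because the `H¹_r` norm and the energy differ exactly
by `∫ F(v) / r`, the derivative terms cancelling. -/

open Real intervalIntegral

lemma ConvexOn.mul_sub_le_sub_of_hasDerivAt {S : Set ℝ} {F : ℝ → ℝ} {F' a b : ℝ}
    (hF : ConvexOn ℝ S F) (ha : a ∈ S) (hb : b ∈ S) (hF' : HasDerivAt F F' a) :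
    F' * (b - a) ≤ F b - F a := by
  rcases lt_trichotomy a b with hab | rfl | hab
  · have := hF.le_slope_of_hasDerivAt ha hb hab hF'
    rwa [slope_def_field, le_div_iff₀ (sub_pos.mpr hab)] at this
  · simp
  · have := hF.slope_le_of_hasDerivAt hb ha hab hF'
    rw [slope_def_field, div_le_iff₀ (sub_pos.mpr hab)] at this
    linarith

lemma monotone_sub_half_sin_two_mul : Monotone fun z : ℝ => z - 1 / 2 * sin (2 * z) := by
  intro x y hxy
  have hsin : sin (2 * y) - sin (2 * x) ≤ 2 * y - 2 * x :=
    (le_abs_self _).trans <| (abs_sin_sub_sin_le _ _).trans (abs_of_nonneg (by linarith)).le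
  dsimp only
  linarith

lemma hasDerivAt_half_sq_sub_half_sin_sq (z : ℝ) :
    HasDerivAt (fun z : ℝ => 1 / 2 * z ^ 2 - 1 / 2 * sin z ^ 2) (z - 1 / 2 * sin (2 * z)) z := by
  refine ((((hasDerivAt_id' z).fun_pow 2).const_mul (1 / 2)).fun_sub
    (((hasDerivAt_sin z).fun_pow 2).const_mul (1 / 2))).congr_deriv ?_
  rw [sin_two_mul]
  push_cast
  ring

lemma convexOn_half_sq_sub_half_sin_sq :
    ConvexOn ℝ Set.univ fun z : ℝ => 1 / 2 * z ^ 2 - 1 / 2 * sin z ^ 2 := by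
  have hderiv := hasDerivAt_half_sq_sub_half_sin_sq
  refine Monotone.convexOn_univ_of_deriv (fun z => (hderiv z).differentiableAt) ?_
  rw [funext fun z => (hderiv z).deriv]
  exact monotone_sub_half_sin_two_mul

lemma sub_half_sin_two_mul_mul_sub_le (a b : ℝ) :
    (a - 1 / 2 * sin (2 * a)) * (b - a) ≤
      (1 / 2 * b ^ 2 - 1 / 2 * sin b ^ 2) - (1 / 2 * a ^ 2 - 1 / 2 * sin a ^ 2) :=
  convexOn_half_sq_sub_half_sin_sq.mul_sub_le_sub_of_hasDerivAt (Set.mem_univ a)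
    (Set.mem_univ b) (hasDerivAt_half_sq_sub_half_sin_sq a)

lemma sub_half_sin_two_mul_mul_sub_div_le {r : ℝ} (hr : 0 < r) (a a' b b' : ℝ) :
    (a - 1 / 2 * sin (2 * a)) * (b - a) / r ≤
      1 / 2 * ((((b' ^ 2 + b ^ 2 / r ^ 2) * r) - ((a' ^ 2 + a ^ 2 / r ^ 2) * r)) +
        (((a' ^ 2 + sin a ^ 2 / r ^ 2) * r) - ((b' ^ 2 + sin b ^ 2 / r ^ 2) * r))) := by
  calc (a - 1 / 2 * sin (2 * a)) * (b - a) / r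
      ≤ ((1 / 2 * b ^ 2 - 1 / 2 * sin b ^ 2) - (1 / 2 * a ^ 2 - 1 / 2 * sin a ^ 2)) / r :=
        div_le_div_of_nonneg_right (sub_half_sin_two_mul_mul_sub_le a b) hr.le
    _ = _ := by
        field_simp
        ring

theorem convexity_control_general (u u' w w' : ℝ → ℝ)
    (hintHu : IntervalIntegrable (fun r => ((u' r)^2 + (u r)^2 / r^2) * r)
      MeasureTheory.volume 0 1)
    (hintHw : IntervalIntegrable (fun r => ((w' r)^2 + (w r)^2 / r^2) * r)
      MeasureTheory.volume 0 1)
    (hintEu : IntervalIntegrable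
      (fun r => ((u' r)^2 + (Real.sin (u r))^2 / r^2) * r)
      MeasureTheory.volume 0 1)
    (hintEw : IntervalIntegrable
      (fun r => ((w' r)^2 + (Real.sin (w r))^2 / r^2) * r)
      MeasureTheory.volume 0 1)
    (hintf : IntervalIntegrable
      (fun r => (u r - (1/2) * Real.sin (2 * u r)) * (w r - u r) / r)
      MeasureTheory.volume 0 1) :
    (∫ r in (0:ℝ)..1, (u r - (1/2) * Real.sin (2 * u r)) * (w r - u r) / r) ≤
      (1/2) * ((∫ r in (0:ℝ)..1, ((w' r)^2 + (w r)^2 / r^2) * r) -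
               (∫ r in (0:ℝ)..1, ((u' r)^2 + (u r)^2 / r^2) * r)) +
      ((1/2) * (∫ r in (0:ℝ)..1, ((u' r)^2 + (Real.sin (u r))^2 / r^2) * r) -
       (1/2) * (∫ r in (0:ℝ)..1, ((w' r)^2 + (Real.sin (w r))^2 / r^2) * r)) := by
  have hmono := integral_mono_on_of_le_Ioo zero_le_one hintf
    (((hintHw.sub hintHu).add (hintEu.sub hintEw)).const_mul (1 / 2))
    fun r hr => sub_half_sin_two_mul_mul_sub_div_le hr.1 (u r) (u' r) (w r) (w' r)
  rw [integral_const_mul, integral_add (hintHw.sub hintHu) (hintEu.sub hintEw),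
    integral_sub hintHw hintHu, integral_sub hintEu hintEw] at hmono
  linarith

theorem convexity_control (u u' w w' : ℝ → ℝ)
    (hderivu : ∀ r ∈ Set.Icc (0:ℝ) 1, HasDerivAt u (u' r) r)
    (hderivw : ∀ r ∈ Set.Icc (0:ℝ) 1, HasDerivAt w (w' r) r)
    (hu0 : u 0 = 0) (hu1 : u 1 = 0) (hw0 : w 0 = 0) (hw1 : w 1 = 0)
    (hintHu : IntervalIntegrable (fun r => ((u' r)^2 + (u r)^2 / r^2) * r)
      MeasureTheory.volume 0 1)
    (hintHw : IntervalIntegrable (fun r => ((w' r)^2 + (w r)^2 / r^2) * r)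
      MeasureTheory.volume 0 1)
    (hintEu : IntervalIntegrable
      (fun r => ((u' r)^2 + (Real.sin (u r))^2 / r^2) * r)
      MeasureTheory.volume 0 1)
    (hintEw : IntervalIntegrable
      (fun r => ((w' r)^2 + (Real.sin (w r))^2 / r^2) * r)
      MeasureTheory.volume 0 1)
    (hintf : IntervalIntegrable
      (fun r => (u r - (1/2) * Real.sin (2 * u r)) * (w r - u r) / r)
      MeasureTheory.volume 0 1) :
    (∫ r in (0:ℝ)..1, (u r - (1/2) * Real.sin (2 * u r)) * (w r - u r) / r) ≤
      (1/2) * ((∫ r in (0:ℝ)..1, ((w' r)^2 + (w r)^2 / r^2) * r) -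
               (∫ r in (0:ℝ)..1, ((u' r)^2 + (u r)^2 / r^2) * r)) +
      ((1/2) * (∫ r in (0:ℝ)..1, ((u' r)^2 + (Real.sin (u r))^2 / r^2) * r) -
       (1/2) * (∫ r in (0:ℝ)..1, ((w' r)^2 + (Real.sin (w r))^2 / r^2) * r)) :=
  convexity_control_general u u' w w' hintHu hintHw hintEu hintEw hintf
end
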